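/- Let R be a commutative ring with identity, M a finitely generated R-module, and U a multiplicatively closed subset of R. Then the set of strongly prime submodules of the U⁻¹R-module U⁻¹M equals {U⁻¹P | P is a strongly prime submodule of M and (P : M) ∩ U = ∅}. -/

import Mathlib

/-- A proper submodule `P` of `M` is *strongly prime* if whenever
`I_x^P • y ⊆ P` (where `I_x^P = (P + Rx : M)`), either `x ∈ P` or `y ∈ P`. -/
def Submodule.IsStronglyPrime {R M : Type*} [CommRing R] [AddCommGroup M] [Module R M]
    (P : Submodule R M) : Prop :=
  P ≠ ⊤ ∧ ∀ x y : M,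
    (∀ r : R, (∀ m : M, r • m ∈ P ⊔ Submodule.span R {x}) → r • y ∈ P) → x ∈ P ∨ y ∈ P

/-!
A strongly prime submodule `P` is prime: if `r • z ∈ P` and `z ∉ P`, then every `t ∈ I_z^P`
sends `r • m` into `r • (P + Rz) ⊆ P`, so `r • m ∈ P` for all `m`. Hence `(P : M) ∩ U = ∅` makes
`P` saturated with respect to `U`, and the defining condition passes from `P` to `U⁻¹P`.
Conversely every submodule of `U⁻¹M` is the localization of its preimage in `M`; finite
generation of `M` lets one clear denominators uniformly, so that `r/s` multiplying `U⁻¹M` into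
`U⁻¹(P + Rx)` yields `u ∈ U` with `u r ∈ (P + Rx : M)`.
-/

open Submodule LocalizedModule

theorem Submodule.exists_forall_smul_mem_of_finite {R M : Type*} [CommSemiring R]
    [AddCommMonoid M] [Module R M] [Module.Finite R M] {U : Submonoid R} {N : Submodule R M}
    (h : ∀ m : M, ∃ u ∈ U, u • m ∈ N) : ∃ u ∈ U, ∀ m : M, u • m ∈ N := by
  obtain ⟨T, hT⟩ := Module.Finite.fg_top (R := R) (M := M)
  choose u hu hum using h
  refine ⟨∏ m ∈ T, u m, prod_mem fun m _ => hu m, fun m => ?_⟩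
  have hspan : span R (T : Set M) ≤ N.comap (LinearMap.lsmul R M (∏ m ∈ T, u m)) :=
    span_le.2 fun m hm => by
      obtain ⟨k, hk⟩ := Finset.dvd_prod_of_mem u hm
      simpa [hk, mul_comm (u m), mul_smul] using N.smul_mem k (hum m)
  exact hspan (hT ▸ mem_top)

namespace LocalizedModule

variable {R M : Type*} [CommSemiring R] [AddCommMonoid M] [Module R M] {U : Submonoid R}

theorem mk_mem_localized_iff {N : Submodule R M} {m : M} {s : U} :
    mk m s ∈ N.localized U ↔ ∃ u : U, (u : R) • m ∈ N := by
  constructor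
  · rintro ⟨n, hn, t, ht⟩
    rw [← IsLocalizedModule.mk_eq_mk', mk_eq] at ht
    obtain ⟨u, hu⟩ := ht
    refine ⟨u * t, ?_⟩
    simp only [Submonoid.smul_def, ← mul_smul] at hu
    rw [Submonoid.coe_mul, ← hu, mul_smul]
    exact N.smul_mem _ (N.smul_mem _ hn)
  · rintro ⟨u, hu⟩
    refine ⟨(u : R) • m, hu, u * s, ?_⟩
    rw [← IsLocalizedModule.mk_eq_mk', ← Submonoid.smul_def]
    exact mk_cancel_common_left u s m

theorem span_mk_eq_span_mk_one (x : M) (s : U) :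
    span (Localization U) {mk x s} = span (Localization U) {mk x 1} := by
  have hunit : mk x 1 = algebraMap R (Localization U) s • mk x s := by
    rw [algebraMap_smul, smul'_mk, ← Submonoid.smul_def, mk_cancel]
  rw [hunit, span_singleton_smul_eq (IsLocalization.map_units (Localization U) s)]

theorem localized_sup_span_singleton (N : Submodule R M) (x : M) (s : U) :
    (N ⊔ span R {x}).localized U = N.localized U ⊔ span (Localization U) {mk x s} := by
  refine ((localized'gi (Localization U) U (mkLinearMap U M)).gc.l_sup).trans ?_
  rw [localized'_span, Set.image_singleton, span_mk_eq_span_mk_one]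
  rfl

theorem exists_forall_smul_mem_of_forall_smul_mem_localized [Module.Finite R M]
    {N : Submodule R M} {r : R} {s : U}
    (h : ∀ z : LocalizedModule U M, Localization.mk r s • z ∈ N.localized U) :
    ∃ u ∈ U, ∀ m : M, (u * r) • m ∈ N := by
  have hpointwise (m : M) : ∃ u ∈ U, u • m ∈ N.comap (LinearMap.lsmul R M r) := by
    have hm := h (mk m 1)
    rw [mk_smul_mk, mk_mem_localized_iff] at hm
    obtain ⟨u, hu⟩ := hm
    exact ⟨u, u.2, by simpa [smul_comm r] using hu⟩
  simpa [mul_smul, smul_comm r] using exists_forall_smul_mem_of_finite hpointwise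

variable (Q : Submodule (Localization U) (LocalizedModule U M))

theorem localized_comap_mkLinearMap :
    ((Q.restrictScalars R).comap (mkLinearMap U M)).localized U = Q :=
  (localized'gi (Localization U) U (mkLinearMap U M)).l_u_eq Q

variable {Q}

theorem not_forall_smul_mem_comap_mkLinearMap (hQ : Q ≠ ⊤) {u : R} (hu : u ∈ U) :
    ¬ ∀ m : M, u • m ∈ (Q.restrictScalars R).comap (mkLinearMap U M) := by
  refine fun h => hQ (eq_top_iff'.2 fun z => ?_)
  induction z using induction_on with
  | h m s =>
    rw [← localized_comap_mkLinearMap Q, mk_mem_localized_iff]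
    exact ⟨⟨u, hu⟩, h m⟩

end LocalizedModule

namespace Submodule.IsStronglyPrime

variable {R M : Type*} [CommRing R] [AddCommGroup M] [Module R M] {U : Submonoid R}

theorem smul_mem_of_smul_mem_of_notMem {P : Submodule R M} (hP : P.IsStronglyPrime) {r : R}
    {z : M} (hrz : r • z ∈ P) (hz : z ∉ P) (m : M) : r • m ∈ P := by
  refine (hP.2 z (r • m) fun t ht => ?_).resolve_left hz
  obtain ⟨p, hp, w, hw, hpw⟩ := mem_sup.mp (ht m)
  obtain ⟨c, rfl⟩ := mem_span_singleton.mp hw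
  rw [smul_comm t r, ← hpw, smul_add, smul_comm r c]
  exact add_mem (P.smul_mem r hp) (P.smul_mem c hrz)

theorem mem_of_smul_mem {P : Submodule R M} (hP : P.IsStronglyPrime)
    (hU : ∀ r : R, r ∈ U → ¬ ∀ m : M, r • m ∈ P) {u : R} (hu : u ∈ U) {z : M}
    (h : u • z ∈ P) : z ∈ P :=
  by_contra fun hz => hU u hu (hP.smul_mem_of_smul_mem_of_notMem h hz)

theorem localized {P : Submodule R M} (hP : P.IsStronglyPrime)
    (hU : ∀ r : R, r ∈ U → ¬ ∀ m : M, r • m ∈ P) : (P.localized U).IsStronglyPrime := by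
  have hmem {m : M} {s : U} : LocalizedModule.mk m s ∈ P.localized U ↔ m ∈ P := by
    rw [mk_mem_localized_iff]
    exact ⟨fun ⟨u, hu⟩ => hP.mem_of_smul_mem hU u.2 hu, fun h => ⟨1, by simpa using h⟩⟩
  refine ⟨fun htop => hP.1 (eq_top_iff'.2 fun m => (hmem (s := 1)).1 (htop ▸ mem_top)), ?_⟩
  intro ξ η H
  induction ξ using LocalizedModule.induction_on with | h x s => ?_
  induction η using LocalizedModule.induction_on with | h y t => ?_
  simp only [hmem]
  refine hP.2 x y fun r hr => (hmem (s := t)).1 ?_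
  have hry := H (Localization.mk r 1) fun ζ => by
    induction ζ using LocalizedModule.induction_on with
    | h m w =>
      rw [← localized_sup_span_singleton, mk_smul_mk, one_mul, mk_mem_localized_iff]
      exact ⟨1, by simpa using hr m⟩
  rwa [mk_smul_mk, one_mul] at hry

theorem comap_mkLinearMap [Module.Finite R M]
    {Q : Submodule (Localization U) (LocalizedModule U M)} (hQ : Q.IsStronglyPrime) :
    ((Q.restrictScalars R).comap (mkLinearMap U M)).IsStronglyPrime := by
  set P := (Q.restrictScalars R).comap (mkLinearMap U M)
  have hPQ : P.localized U = Q := localized_comap_mkLinearMap Q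
  refine ⟨fun hP => hQ.1 ?_, fun x y H =>
    hQ.2 (LocalizedModule.mk x 1) (LocalizedModule.mk y 1) fun ρ hρ => ?_⟩
  · rw [← hPQ, hP]
    exact localized'_top _ _ _
  induction ρ using Localization.induction_on with
  | H rs =>
    rw [← hPQ, ← localized_sup_span_singleton] at hρ
    obtain ⟨u, hu, hur⟩ := exists_forall_smul_mem_of_forall_smul_mem_localized hρ
    rw [← hPQ, mk_smul_mk, mk_mem_localized_iff]
    exact ⟨⟨u, hu⟩, by simpa [mul_smul] using H _ hur⟩

end Submodule.IsStronglyPrime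

/-- For a finitely generated module `M`, the strongly prime submodules of `U⁻¹M` are exactly
the submodules `U⁻¹P` where `P` is a strongly prime submodule of `M` with `(P : M) ∩ U = ∅`. -/
theorem stronglyPrime_localized_eq_of_fg
    {R M : Type*} [CommRing R] [AddCommGroup M] [Module R M] [Module.Finite R M]
    (U : Submonoid R) :
    {Q : Submodule (Localization U) (LocalizedModule U M) | Q.IsStronglyPrime} =
      {Q : Submodule (Localization U) (LocalizedModule U M) |
        ∃ P : Submodule R M, P.IsStronglyPrime ∧
          (∀ r : R, r ∈ U → ¬ (∀ m : M, r • m ∈ P)) ∧ Q = P.localized U} := by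
  ext Q
  constructor
  · intro hQ
    exact ⟨_, hQ.comap_mkLinearMap, fun _ hr => not_forall_smul_mem_comap_mkLinearMap hQ.1 hr,
      (localized_comap_mkLinearMap Q).symm⟩
  · rintro ⟨P, hP, hU, rfl⟩
    exact hP.localized hU
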